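/- For every positive integer m ≥ 2, the maximal sum satisfies S_{m, ⌊(m−1)/2⌋} < 1. -/

import Mathlib

open Finset

/-- `S m ℓ = ∑_{k=ℓ}^{2ℓ} C(m−ℓ, m−k) C(m+k, 2k) C(2m, 2k)⁻¹ (2ℓ+1−k)/2^{m−k}`. -/
noncomputable def S (m ℓ : ℕ) : ℝ :=
  ∑ k ∈ Finset.Icc ℓ (2 * ℓ),
    (Nat.choose (m - ℓ) (m - k) : ℝ) * (Nat.choose (m + k) (2 * k) : ℝ) *
      ((Nat.choose (2 * m) (2 * k) : ℝ))⁻¹ * ((2 * (ℓ : ℝ) + 1 - k) / 2 ^ (m - k))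


/-! Auxiliary lemmas -/

lemma choose_pow_le' {n N : ℕ} (h : n ≤ N) : ∀ d : ℕ, n.choose d * N ^ d ≤ N.choose d * n ^ d := by
  intro d
  induction d with
  | zero => simp
  | succ d ih =>
    rcases le_or_gt (d+1) n with hd | hd
    · have key : (n - d) * N ≤ (N - d) * n := by
        have hdn : d ≤ n := by omega
        have hdN : d ≤ N := le_trans hdn h
        have h1 : d * n ≤ d * N := Nat.mul_le_mul_left d h
        zify [hdn, hdN]
        nlinarith
      have e1 : n.choose (d+1) * (d+1) = n.choose d * (n - d) := Nat.choose_succ_right_eq n d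
      have e2 : N.choose (d+1) * (d+1) = N.choose d * (N - d) := Nat.choose_succ_right_eq N d
      have hmain : n.choose (d+1) * (d+1) * N ^ (d+1) ≤ N.choose (d+1) * (d+1) * n ^ (d+1) := by
        rw [e1, e2]
        calc n.choose d * (n - d) * N ^ (d + 1) = (n.choose d * N ^ d) * ((n-d) * N) := by ring
          _ ≤ (N.choose d * n ^ d) * ((N-d) * n) := Nat.mul_le_mul ih key
          _ = N.choose d * (N - d) * n ^ (d+1) := by ring
      have hpos : 0 < d + 1 := Nat.succ_pos d
      calc n.choose (d+1) * N ^ (d+1) = n.choose (d+1) * (d+1) * N ^ (d+1) / (d+1) := by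
            rw [Nat.mul_right_comm, Nat.mul_div_cancel _ hpos]
        _ ≤ N.choose (d+1) * (d+1) * n ^ (d+1) / (d+1) := Nat.div_le_div_right hmain
        _ = N.choose (d+1) * n ^ (d+1) := by rw [Nat.mul_right_comm, Nat.mul_div_cancel _ hpos]
    · rw [Nat.choose_eq_zero_of_lt hd]
      simp

lemma ratio_le' {n N d : ℕ} (h : n ≤ N) (hd : d ≤ N) (hN : 0 < N) :
    (n.choose d : ℝ) * ((N.choose d : ℝ))⁻¹ ≤ ((n : ℝ) / N) ^ d := by
  have hc : (0:ℝ) < N.choose d := by exact_mod_cast Nat.choose_pos hd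
  have hNp : (0:ℝ) < (N:ℝ)^d := by positivity
  rw [div_pow, mul_inv_le_iff₀ hc, div_mul_eq_mul_div, le_div_iff₀ hNp]
  calc (n.choose d : ℝ) * N ^ d = ((n.choose d * N ^ d : ℕ) : ℝ) := by push_cast; ring
    _ ≤ ((N.choose d * n ^ d : ℕ) : ℝ) := by exact_mod_cast choose_pow_le' h d
    _ = (n:ℝ)^d * N.choose d := by push_cast; ring

lemma choose_ident' {m k : ℕ} (hk : k ≤ m) :
    (2*m).choose (m - k) * ((m+k).choose (2*k)) = (2*m).choose (2*k) * Nat.centralBinom (m - k) := by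
  have h1 : m + k ≤ 2 * m := by omega
  have h2 : 2 * k ≤ m + k := by omega
  have h3 := Nat.choose_mul (n := 2*m) h2
  rw [show 2*m - 2*k = 2*(m-k) by omega, show m + k - 2*k = m - k by omega] at h3
  rw [show (2*m).choose (m-k) = (2*m).choose (m+k) by
      rw [← Nat.choose_symm h1, show 2*m - (m+k) = m - k by omega]]
  rw [h3, Nat.centralBinom]

lemma geo_bd' {q : ℝ} (h0 : 0 ≤ q) (h1 : q < 1) (n : ℕ) :
    ∑ i ∈ Finset.range n, q ^ i ≤ (1 - q)⁻¹ := by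
  have hq : 0 < 1 - q := by linarith
  rw [geom_sum_eq (by intro h; rw [h] at h1; linarith) n]
  rw [div_le_iff_of_neg (by linarith : q - 1 < 0)]
  have : 0 ≤ q ^ n := pow_nonneg h0 n
  have h2 : (1-q)⁻¹ * (q-1) = -1 := by field_simp; ring
  rw [h2]; linarith

/-! The dominating sequences -/

noncomputable def vOdd (d : ℕ) : ℝ := d * Nat.centralBinom d * (3/22) ^ d

noncomputable def wEven (d : ℕ) : ℝ := ((d:ℝ) - 1) * Nat.centralBinom d * (3/20) ^ d

lemma vOdd_nonneg (d : ℕ) : 0 ≤ vOdd d := by unfold vOdd; positivity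

lemma wEven_nonneg (d : ℕ) (hd : 1 ≤ d) : 0 ≤ wEven d := by
  unfold wEven
  have : (1:ℝ) ≤ (d:ℝ) := by exact_mod_cast hd
  have h1 : (0:ℝ) ≤ (d:ℝ) - 1 := by linarith
  positivity

lemma vOdd_step (d : ℕ) (hd : 3 ≤ d) : vOdd (d+1) ≤ (7/11) * vOdd d := by
  unfold vOdd
  have hR : ((d:ℝ)+1) * (Nat.centralBinom (d+1) : ℝ) = 2 * (2*(d:ℝ)+1) * Nat.centralBinom d := by
    exact_mod_cast Nat.succ_mul_centralBinom_succ d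
  have hd1 : (0:ℝ) < (d:ℝ)+1 := by positivity
  have hdR : (3:ℝ) ≤ (d:ℝ) := by exact_mod_cast hd
  have hcb : (0:ℝ) ≤ (Nat.centralBinom d : ℝ) := Nat.cast_nonneg _
  have hcbs : (Nat.centralBinom (d+1) : ℝ) = 2 * (2*(d:ℝ)+1) * Nat.centralBinom d / ((d:ℝ)+1) := by
    field_simp at hR ⊢; linarith
  rw [hcbs, pow_succ]
  push_cast
  field_simp
  have z : (0:ℝ) ≤ (Nat.centralBinom d:ℝ) * 3^d * 22^d := by positivity
  nlinarith [mul_nonneg z (sub_nonneg.mpr hdR), mul_nonneg hcb (sub_nonneg.mpr hdR)]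

lemma wEven_step (d : ℕ) (hd : 3 ≤ d) : wEven (d+1) ≤ (63/80) * wEven d := by
  unfold wEven
  have hR : ((d:ℝ)+1) * (Nat.centralBinom (d+1) : ℝ) = 2 * (2*(d:ℝ)+1) * Nat.centralBinom d := by
    exact_mod_cast Nat.succ_mul_centralBinom_succ d
  have hd1 : (0:ℝ) < (d:ℝ)+1 := by positivity
  have hdR : (3:ℝ) ≤ (d:ℝ) := by exact_mod_cast hd
  have hcb : (0:ℝ) ≤ (Nat.centralBinom d : ℝ) := Nat.cast_nonneg _
  have hcbs : (Nat.centralBinom (d+1) : ℝ) = 2 * (2*(d:ℝ)+1) * Nat.centralBinom d / ((d:ℝ)+1) := by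
    field_simp at hR ⊢; linarith
  rw [hcbs, pow_succ]
  push_cast
  field_simp
  have z : (0:ℝ) ≤ (Nat.centralBinom d:ℝ) * 3^d * 20^d := by positivity
  nlinarith [mul_nonneg (mul_nonneg z (sub_nonneg.mpr hdR)) (by positivity : (0:ℝ) ≤ 5*(d:ℝ)+7),
    mul_nonneg (mul_nonneg hcb (sub_nonneg.mpr hdR)) (by positivity : (0:ℝ) ≤ 5*(d:ℝ)+7)]

lemma vOdd_geo : ∀ i : ℕ, vOdd (3+i) ≤ vOdd 3 * (7/11) ^ i := by
  intro i
  induction i with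
  | zero => simp
  | succ i ih =>
    have h1 : 3+(i+1) = (3+i)+1 := by omega
    rw [h1, pow_succ]
    calc vOdd ((3+i)+1) ≤ (7/11) * vOdd (3+i) := vOdd_step _ (by omega)
      _ ≤ (7/11) * (vOdd 3 * (7/11)^i) := by linarith [ih]
      _ = vOdd 3 * ((7/11)^i * (7/11)) := by ring

lemma wEven_geo : ∀ i : ℕ, wEven (3+i) ≤ wEven 3 * (63/80) ^ i := by
  intro i
  induction i with
  | zero => simp
  | succ i ih =>
    have h1 : 3+(i+1) = (3+i)+1 := by omega
    rw [h1, pow_succ]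
    calc wEven ((3+i)+1) ≤ (63/80) * wEven (3+i) := wEven_step _ (by omega)
      _ ≤ (63/80) * (wEven 3 * (63/80)^i) := by linarith [ih]
      _ = wEven 3 * ((63/80)^i * (63/80)) := by ring

lemma vOdd_vals : vOdd 1 = 3/11 ∧ vOdd 2 = 27/121 ∧ vOdd 3 = 405/2662 := by
  refine ⟨?_, ?_, ?_⟩ <;> norm_num [vOdd, Nat.centralBinom, Nat.choose]

lemma wEven_vals : wEven 2 = 27/200 ∧ wEven 3 = 27/200 := by
  refine ⟨?_, ?_⟩ <;> norm_num [wEven, Nat.centralBinom, Nat.choose]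

lemma sum_vOdd_lt (N : ℕ) : ∑ d ∈ Icc 1 N, vOdd d < 1 := by
  obtain ⟨hv1, hv2, hv3⟩ := vOdd_vals
  rcases le_or_gt N 2 with hN | hN
  · interval_cases N
    · simp
    · simp [hv1]; norm_num
    · rw [show Icc 1 2 = ({1,2} : Finset ℕ) from rfl,
        Finset.sum_insert (by decide), Finset.sum_singleton, hv1, hv2]; norm_num
  · rw [← Finset.Ico_add_one_right_eq_Icc, ← Finset.sum_Ico_consecutive _ (by omega : 1 ≤ 3) (by omega : 3 ≤ N+1)]
    have h12 : ∑ d ∈ Ico 1 3, vOdd d = 3/11 + 27/121 := by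
      rw [show Ico 1 3 = ({1,2} : Finset ℕ) from rfl,
        Finset.sum_insert (by decide), Finset.sum_singleton, hv1, hv2]
    have htail : ∑ d ∈ Ico 3 (N+1), vOdd d ≤ (405/2662) * (1 - 7/11)⁻¹ := by
      rw [Finset.sum_Ico_eq_sum_range]
      calc ∑ i ∈ range (N+1-3), vOdd (3+i) ≤ ∑ i ∈ range (N+1-3), vOdd 3 * (7/11)^i :=
            Finset.sum_le_sum fun i _ => vOdd_geo i
        _ = vOdd 3 * ∑ i ∈ range (N+1-3), (7/11)^i := by rw [Finset.mul_sum]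
        _ ≤ vOdd 3 * (1 - 7/11)⁻¹ :=
            mul_le_mul_of_nonneg_left (geo_bd' (by norm_num) (by norm_num) _) (vOdd_nonneg 3)
        _ = (405/2662) * (1 - 7/11)⁻¹ := by rw [hv3]
    rw [h12]
    have : (405/2662 : ℝ) * (1 - 7/11)⁻¹ < 1 - (3/11 + 27/121) := by norm_num
    linarith

lemma sum_wEven_lt (N : ℕ) : ∑ d ∈ Icc 2 N, wEven d < 1 := by
  obtain ⟨hw2, hw3⟩ := wEven_vals
  rcases le_or_gt N 2 with hN | hN
  · rcases le_or_gt N 1 with hN1 | hN1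
    · rw [Finset.Icc_eq_empty (by omega)]; norm_num
    · have : N = 2 := by omega
      subst this
      rw [Finset.Icc_self, Finset.sum_singleton, hw2]; norm_num
  · rw [← Finset.Ico_add_one_right_eq_Icc, ← Finset.sum_Ico_consecutive _ (by omega : 2 ≤ 3) (by omega : 3 ≤ N+1)]
    have h2 : ∑ d ∈ Ico 2 3, wEven d = 27/200 := by
      rw [show Ico 2 3 = ({2} : Finset ℕ) from rfl, Finset.sum_singleton, hw2]
    have htail : ∑ d ∈ Ico 3 (N+1), wEven d ≤ (27/200) * (1 - 63/80)⁻¹ := by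
      rw [Finset.sum_Ico_eq_sum_range]
      calc ∑ i ∈ range (N+1-3), wEven (3+i) ≤ ∑ i ∈ range (N+1-3), wEven 3 * (63/80)^i :=
            Finset.sum_le_sum fun i _ => wEven_geo i
        _ = wEven 3 * ∑ i ∈ range (N+1-3), (63/80)^i := by rw [Finset.mul_sum]
        _ ≤ wEven 3 * (1 - 63/80)⁻¹ :=
            mul_le_mul_of_nonneg_left (geo_bd' (by norm_num) (by norm_num) _) (wEven_nonneg 3 (by norm_num))
        _ = (27/200) * (1 - 63/80)⁻¹ := by rw [hw3]
    rw [h2]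
    have : (27/200 : ℝ) * (1 - 63/80)⁻¹ < 1 - 27/200 := by norm_num
    linarith

/-! Termwise bound -/

lemma term_le (m ℓ k : ℕ) (hl : ℓ ≤ k) (hk : k ≤ 2*ℓ) (h2 : 2*ℓ < m) :
    (Nat.choose (m - ℓ) (m - k) : ℝ) * (Nat.choose (m + k) (2 * k) : ℝ) *
      ((Nat.choose (2 * m) (2 * k) : ℝ))⁻¹ * ((2 * (ℓ : ℝ) + 1 - k) / 2 ^ (m - k))
    ≤ ((2*ℓ+1-k : ℕ) : ℝ) * Nat.centralBinom (m-k) * (((m - ℓ : ℕ):ℝ) / (4*m)) ^ (m-k) := by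
  have hkm : k ≤ m := by omega
  have hm0 : 0 < m := by omega
  set d := m - k with hdd
  have hco : (2 * (ℓ : ℝ) + 1 - k) = ((2*ℓ+1-k : ℕ) : ℝ) := by
    rw [Nat.cast_sub (by omega)]; push_cast; ring
  have hident : (Nat.choose (m+k) (2*k) : ℝ) * ((Nat.choose (2*m) (2*k) : ℝ))⁻¹
      = (Nat.centralBinom d : ℝ) * ((Nat.choose (2*m) d : ℝ))⁻¹ := by
    have hid := choose_ident' hkm
    have hpos1 : (0:ℝ) < Nat.choose (2*m) (2*k) := by
      exact_mod_cast Nat.choose_pos (by omega)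
    have hpos2 : (0:ℝ) < Nat.choose (2*m) d := by
      exact_mod_cast Nat.choose_pos (by omega)
    have hidR : (Nat.choose (2*m) d : ℝ) * (Nat.choose (m+k) (2*k) : ℝ)
        = (Nat.choose (2*m) (2*k) : ℝ) * (Nat.centralBinom d : ℝ) := by exact_mod_cast hid
    field_simp
    linear_combination hidR
  have hA : (Nat.choose (m-ℓ) d : ℝ) * ((Nat.choose (2*m) d : ℝ))⁻¹
      ≤ (((m - ℓ : ℕ):ℝ) / ((2*m : ℕ):ℝ)) ^ d := ratio_le' (by omega) (by omega) (by omega)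
  have hcoeff : (0:ℝ) ≤ ((2*ℓ+1-k : ℕ) : ℝ) := Nat.cast_nonneg _
  have hcb : (0:ℝ) ≤ (Nat.centralBinom d : ℝ) := Nat.cast_nonneg _
  calc (Nat.choose (m - ℓ) d : ℝ) * (Nat.choose (m + k) (2 * k) : ℝ) *
      ((Nat.choose (2 * m) (2 * k) : ℝ))⁻¹ * ((2 * (ℓ : ℝ) + 1 - k) / 2 ^ d)
      = (Nat.choose (m - ℓ) d : ℝ) * ((Nat.choose (m + k) (2 * k) : ℝ) *
        ((Nat.choose (2 * m) (2 * k) : ℝ))⁻¹) * (((2*ℓ+1-k : ℕ) : ℝ) / 2 ^ d) := by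
        rw [hco]; ring
    _ = (Nat.choose (m - ℓ) d : ℝ) * ((Nat.centralBinom d : ℝ) * ((Nat.choose (2*m) d : ℝ))⁻¹) *
        (((2*ℓ+1-k : ℕ) : ℝ) / 2 ^ d) := by rw [hident]
    _ = (((2*ℓ+1-k : ℕ) : ℝ) * (Nat.centralBinom d : ℝ) * (1 / 2 ^ d)) *
        ((Nat.choose (m - ℓ) d : ℝ) * ((Nat.choose (2*m) d : ℝ))⁻¹) := by ring
    _ ≤ (((2*ℓ+1-k : ℕ) : ℝ) * (Nat.centralBinom d : ℝ) * (1 / 2 ^ d)) *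
        ((((m - ℓ : ℕ):ℝ) / ((2*m : ℕ):ℝ)) ^ d) := by
        refine mul_le_mul_of_nonneg_left hA (by positivity)
    _ = ((2*ℓ+1-k : ℕ) : ℝ) * Nat.centralBinom d * (((m - ℓ : ℕ):ℝ) / (4*m)) ^ d := by
        have hsplit : ((m - ℓ : ℕ):ℝ) / (4*(m:ℝ)) = ((m - ℓ : ℕ):ℝ) / (((2*m : ℕ):ℝ)) * (1/2) := by
          push_cast; ring
        rw [hsplit, mul_pow]
        simp only [one_div, inv_pow]
        ring

/-! Small cases -/

lemma small_case_aux :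
    S 2 0 < 1 ∧ S 3 1 < 1 ∧ S 4 1 < 1 ∧ S 5 2 < 1 ∧ S 6 2 < 1 ∧ S 7 3 < 1 ∧
      S 8 3 < 1 ∧ S 9 4 < 1 := by
  refine ⟨?_, ?_, ?_, ?_, ?_, ?_, ?_, ?_⟩
  · unfold S
    rw [show Finset.Icc 0 (2*0) = ({0} : Finset ℕ) from rfl]
    norm_num [Nat.choose]
  · unfold S
    rw [show Finset.Icc 1 (2*1) = ({1,2} : Finset ℕ) from rfl]
    norm_num [Finset.sum_insert, Nat.choose]
  · unfold S
    rw [show Finset.Icc 1 (2*1) = ({1,2} : Finset ℕ) from rfl]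
    norm_num [Finset.sum_insert, Nat.choose]
  · unfold S
    rw [show Finset.Icc 2 (2*2) = ({2,3,4} : Finset ℕ) from rfl]
    norm_num [Finset.sum_insert, Nat.choose]
  · unfold S
    rw [show Finset.Icc 2 (2*2) = ({2,3,4} : Finset ℕ) from rfl]
    norm_num [Finset.sum_insert, Nat.choose]
  · unfold S
    rw [show Finset.Icc 3 (2*3) = ({3,4,5,6} : Finset ℕ) from rfl]
    norm_num [Finset.sum_insert, Nat.choose]
  · unfold S
    rw [show Finset.Icc 3 (2*3) = ({3,4,5,6} : Finset ℕ) from rfl]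
    norm_num [Finset.sum_insert, Nat.choose]
  · unfold S
    rw [show Finset.Icc 4 (2*4) = ({4,5,6,7,8} : Finset ℕ) from rfl]
    norm_num [Finset.sum_insert, Nat.choose]

lemma odd_case (t : ℕ) (ht : 5 ≤ t) : S (2*t+1) t < 1 := by
  have hstep : S (2*t+1) t ≤ ∑ k ∈ Finset.Icc t (2*t), vOdd (2*t+1 - k) := by
    apply Finset.sum_le_sum
    intro k hk
    rw [Finset.mem_Icc] at hk
    obtain ⟨hk1, hk2⟩ := hk
    have h2 : 2*t < 2*t+1 := by omega
    refine le_trans (term_le (2*t+1) t k hk1 hk2 h2) ?_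
    set d := 2*t+1 - k with hdd
    have hd1 : 1 ≤ d := by omega
    have hml : (2*t+1 - t : ℕ) = t + 1 := by omega
    rw [hml]
    unfold vOdd
    have hx0 : (0:ℝ) ≤ ((t+1 : ℕ):ℝ) / (4*(2*t+1 : ℕ)) := by positivity
    have hx : ((t+1 : ℕ):ℝ) / (4*((2*t+1 : ℕ):ℝ)) ≤ 3/22 := by
      rw [div_le_div_iff₀ (by positivity) (by norm_num)]
      push_cast
      have : (5:ℝ) ≤ t := by exact_mod_cast ht
      linarith
    have hpow : (((t+1 : ℕ):ℝ) / (4*((2*t+1 : ℕ):ℝ))) ^ d ≤ (3/22 : ℝ)^d := by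
      exact pow_le_pow_left₀ hx0 hx d
    have hcb : (0:ℝ) ≤ (d:ℝ) * Nat.centralBinom d := by positivity
    calc ((d:ℕ):ℝ) * Nat.centralBinom d * (((t+1 : ℕ):ℝ) / (4*((2*t+1 : ℕ):ℝ))) ^ d
        ≤ (d:ℝ) * Nat.centralBinom d * (3/22)^d := by
          exact mul_le_mul_of_nonneg_left hpow hcb
      _ = (d:ℝ) * Nat.centralBinom d * (3/22)^d := by norm_num
  have hre : ∑ k ∈ Finset.Icc t (2*t), vOdd (2*t+1 - k) = ∑ d ∈ Finset.Icc 1 (t+1), vOdd d := by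
    refine Finset.sum_nbij' (fun k => 2*t+1 - k) (fun d => 2*t+1 - d) ?_ ?_ ?_ ?_ ?_
    · intro a ha; rw [Finset.mem_Icc] at *; omega
    · intro a ha; rw [Finset.mem_Icc] at *; omega
    · intro a ha; rw [Finset.mem_Icc] at ha; omega
    · intro a ha; rw [Finset.mem_Icc] at ha; omega
    · intro a _; rfl
  calc S (2*t+1) t ≤ ∑ k ∈ Finset.Icc t (2*t), vOdd (2*t+1 - k) := hstep
    _ = ∑ d ∈ Finset.Icc 1 (t+1), vOdd d := hre
    _ < 1 := sum_vOdd_lt (t+1)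

lemma even_case (s : ℕ) (hs : 4 ≤ s) : S (2*s+2) s < 1 := by
  have hstep : S (2*s+2) s ≤ ∑ k ∈ Finset.Icc s (2*s), wEven (2*s+2 - k) := by
    apply Finset.sum_le_sum
    intro k hk
    rw [Finset.mem_Icc] at hk
    obtain ⟨hk1, hk2⟩ := hk
    have h2 : 2*s < 2*s+2 := by omega
    refine le_trans (term_le (2*s+2) s k hk1 hk2 h2) ?_
    set d := 2*s+2 - k with hdd
    have hd2 : 2 ≤ d := by omega
    have hco : (2*s+1-k : ℕ) = d - 1 := by omega
    have hml : (2*s+2 - s : ℕ) = s + 2 := by omega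
    rw [hco, hml]
    unfold wEven
    have hcoR : ((d - 1 : ℕ):ℝ) = (d:ℝ) - 1 := by
      rw [Nat.cast_sub (by omega)]; norm_num
    have hx0 : (0:ℝ) ≤ ((s+2 : ℕ):ℝ) / (4*((2*s+2 : ℕ):ℝ)) := by positivity
    have hx : ((s+2 : ℕ):ℝ) / (4*((2*s+2 : ℕ):ℝ)) ≤ 3/20 := by
      rw [div_le_div_iff₀ (by positivity) (by norm_num)]
      push_cast
      have : (4:ℝ) ≤ s := by exact_mod_cast hs
      linarith
    have hpow : (((s+2 : ℕ):ℝ) / (4*((2*s+2 : ℕ):ℝ))) ^ d ≤ (3/20 : ℝ)^d := by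
      exact pow_le_pow_left₀ hx0 hx d
    have hd1R : (0:ℝ) ≤ (d:ℝ) - 1 := by
      have : (2:ℝ) ≤ (d:ℝ) := by exact_mod_cast hd2
      linarith
    have hcb : (0:ℝ) ≤ ((d:ℝ) - 1) * Nat.centralBinom d := by positivity
    rw [hcoR]
    exact mul_le_mul_of_nonneg_left hpow hcb
  have hre : ∑ k ∈ Finset.Icc s (2*s), wEven (2*s+2 - k) = ∑ d ∈ Finset.Icc 2 (s+2), wEven d := by
    refine Finset.sum_nbij' (fun k => 2*s+2 - k) (fun d => 2*s+2 - d) ?_ ?_ ?_ ?_ ?_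
    · intro a ha; rw [Finset.mem_Icc] at *; omega
    · intro a ha; rw [Finset.mem_Icc] at *; omega
    · intro a ha; rw [Finset.mem_Icc] at ha; omega
    · intro a ha; rw [Finset.mem_Icc] at ha; omega
    · intro a _; rfl
  calc S (2*s+2) s ≤ ∑ k ∈ Finset.Icc s (2*s), wEven (2*s+2 - k) := hstep
    _ = ∑ d ∈ Finset.Icc 2 (s+2), wEven d := hre
    _ < 1 := sum_wEven_lt (s+2)

/-! Main theorem -/

/-- For `m ≥ 2`, the maximal sum `S_{m, ⌊(m−1)/2⌋}` is strictly less than `1`. -/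
theorem S_max_lt_one (m : ℕ) (hm : 2 ≤ m) : S m ((m - 1) / 2) < 1 := by
  obtain ⟨h2, h3, h4, h5, h6, h7, h8, h9⟩ := small_case_aux
  rcases lt_or_ge m 10 with hsmall | hlarge
  · interval_cases m
    · exact h2
    · exact h3
    · exact h4
    · exact h5
    · exact h6
    · exact h7
    · exact h8
    · exact h9
  · rcases Nat.even_or_odd' m with ⟨t, ht | ht⟩
    · subst ht
      have ht5 : 4 ≤ t - 1 := by omega
      have hl : (2*t - 1)/2 = t - 1 := by omega
      rw [hl]
      have hmm : 2*t = 2*(t-1)+2 := by omega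
      rw [hmm]
      exact even_case (t-1) ht5
    · subst ht
      have ht5 : 5 ≤ t := by omega
      have hl : (2*t + 1 - 1)/2 = t := by omega
      rw [hl]
      exact odd_case t ht5
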